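/- Let 𝒜 : ℝ^{m×n} → ℝ^p be a linear map with restricted isometry constant R_{3r}, let X_l = U_l Σ_l V_l^* be a rank-r matrix with tangent space S_l, and let X be another m×n matrix of rank r. Then ‖P_{S_l} 𝒜* 𝒜 (I − P_{S_l})(X)‖_F ≤ R_{3r} ‖(I − P_{S_l})(X)‖_F. -/
import Mathlib


open Matrix BigOperators

/-- Frobenius inner product of two real matrices. -/
noncomputable def frobInner {m n : ℕ} (A B : Matrix (Fin m) (Fin n) ℝ) : ℝ :=
  ∑ i, ∑ j, A i j * B i j

/-- Frobenius norm of a real matrix. -/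
noncomputable def frobNorm {m n : ℕ} (A : Matrix (Fin m) (Fin n) ℝ) : ℝ :=
  Real.sqrt (∑ i, ∑ j, (A i j) ^ 2)

/-- Euclidean inner product on `ℝ^p`. -/
noncomputable def euclInner {p : ℕ} (x y : Fin p → ℝ) : ℝ := ∑ i, x i * y i

/-- Euclidean norm on `ℝ^p`. -/
noncomputable def euclNorm {p : ℕ} (x : Fin p → ℝ) : ℝ := Real.sqrt (∑ i, (x i) ^ 2)

/-- `R` is the restricted isometry constant of order `s` of the linear map `A`:
the smallest number `t` such that `(1-t)‖Z‖_F² ≤ ‖A Z‖₂² ≤ (1+t)‖Z‖_F²`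
for all matrices `Z` of rank at most `s`. -/
def IsRIC {m n p : ℕ} (A : Matrix (Fin m) (Fin n) ℝ →ₗ[ℝ] (Fin p → ℝ)) (s : ℕ) (R : ℝ) :
    Prop :=
  IsLeast {t : ℝ | ∀ Z : Matrix (Fin m) (Fin n) ℝ, Z.rank ≤ s →
    (1 - t) * (frobNorm Z) ^ 2 ≤ (euclNorm (A Z)) ^ 2 ∧
      (euclNorm (A Z)) ^ 2 ≤ (1 + t) * (frobNorm Z) ^ 2} R

/-- Orthogonal projection onto the tangent space of the rank-`r` manifold at
`U * Σ * Vᵀ`: `P(Z) = U Uᵀ Z + Z V Vᵀ − U Uᵀ Z V Vᵀ`. -/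
noncomputable def tangentProj {m n r : ℕ} (U : Matrix (Fin m) (Fin r) ℝ)
    (V : Matrix (Fin n) (Fin r) ℝ) (Z : Matrix (Fin m) (Fin n) ℝ) :
    Matrix (Fin m) (Fin n) ℝ :=
  U * Uᵀ * Z + Z * (V * Vᵀ) - U * Uᵀ * Z * (V * Vᵀ)

/-- Spectral (operator) norm of a real matrix. -/
noncomputable def specNorm {m n : ℕ} (A : Matrix (Fin m) (Fin n) ℝ) : ℝ :=
  sSup {c : ℝ | ∃ x : Fin n → ℝ, euclNorm x ≤ 1 ∧ c = euclNorm (A.mulVec x)}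

section Aux

variable {m n p r : ℕ}

lemma frobNorm_sq (A : Matrix (Fin m) (Fin n) ℝ) : frobNorm A ^ 2 = frobInner A A := by
  rw [frobNorm, Real.sq_sqrt (by positivity)]
  simp [frobInner, sq]

lemma frobNorm_nonneg' (A : Matrix (Fin m) (Fin n) ℝ) : 0 ≤ frobNorm A := Real.sqrt_nonneg _

lemma frobNorm_eq_zero' {A : Matrix (Fin m) (Fin n) ℝ} (h : frobNorm A = 0) : A = 0 := by
  rw [frobNorm, Real.sqrt_eq_zero (by positivity)] at h
  ext i j
  have h1 := (Finset.sum_eq_zero_iff_of_nonneg (fun i _ => by positivity)).1 h i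
    (Finset.mem_univ i)
  have h2 := (Finset.sum_eq_zero_iff_of_nonneg (fun j _ => by positivity)).1 h1 j
    (Finset.mem_univ j)
  simpa using pow_eq_zero_iff (n := 2) (by norm_num) |>.1 h2

lemma frobInner_eq_trace (A B : Matrix (Fin m) (Fin n) ℝ) :
    frobInner A B = Matrix.trace (Aᵀ * B) := by
  simp only [frobInner, Matrix.trace, Matrix.diag, Matrix.mul_apply, Matrix.transpose_apply]
  rw [Finset.sum_comm]

lemma frobInner_comm (A B : Matrix (Fin m) (Fin n) ℝ) : frobInner A B = frobInner B A := by
  simp [frobInner, mul_comm]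

lemma frobInner_mul_left (C : Matrix (Fin m) (Fin m) ℝ) (X Y : Matrix (Fin m) (Fin n) ℝ) :
    frobInner (C * X) Y = frobInner X (Cᵀ * Y) := by
  rw [frobInner_eq_trace, frobInner_eq_trace, Matrix.transpose_mul, Matrix.mul_assoc]

lemma frobInner_mul_right (D : Matrix (Fin n) (Fin n) ℝ) (X Y : Matrix (Fin m) (Fin n) ℝ) :
    frobInner (X * D) Y = frobInner X (Y * Dᵀ) := by
  rw [frobInner_eq_trace, frobInner_eq_trace, Matrix.transpose_mul,
    Matrix.mul_assoc, Matrix.trace_mul_comm, Matrix.mul_assoc]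

lemma frobInner_sub_right (A B C : Matrix (Fin m) (Fin n) ℝ) :
    frobInner A (B - C) = frobInner A B - frobInner A C := by
  simp [frobInner, Matrix.sub_apply, mul_sub, Finset.sum_sub_distrib]

lemma frobInner_expand (a b : ℝ) (Y W : Matrix (Fin m) (Fin n) ℝ) :
    frobInner (a • Y + b • W) (a • Y + b • W) =
      a ^ 2 * frobInner Y Y + 2 * a * b * frobInner Y W + b ^ 2 * frobInner W W := by
  have h : ∀ i j, (a • Y + b • W) i j * (a • Y + b • W) i j =
      a ^ 2 * (Y i j * Y i j) + 2 * a * b * (Y i j * W i j) + b ^ 2 * (W i j * W i j) := by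
    intro i j
    simp only [Matrix.add_apply, Matrix.smul_apply, smul_eq_mul]
    ring
  simp only [frobInner, h, Finset.sum_add_distrib, Finset.mul_sum]

lemma euclNorm_sq (x : Fin p → ℝ) : euclNorm x ^ 2 = euclInner x x := by
  rw [euclNorm, Real.sq_sqrt (by positivity)]
  simp [euclInner, sq]

lemma euclInner_expand (a b : ℝ) (u v : Fin p → ℝ) :
    euclInner (a • u + b • v) (a • u + b • v) =
      a ^ 2 * euclInner u u + 2 * a * b * euclInner u v + b ^ 2 * euclInner v v := by
  have h : ∀ i, (a • u + b • v) i * (a • u + b • v) i =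
      a ^ 2 * (u i * u i) + 2 * a * b * (u i * v i) + b ^ 2 * (v i * v i) := by
    intro i
    simp only [Pi.add_apply, Pi.smul_apply, smul_eq_mul]
    ring
  simp only [euclInner, h, Finset.sum_add_distrib, Finset.mul_sum]

lemma matRank_add_le (A B : Matrix (Fin m) (Fin n) ℝ) :
    (A + B).rank ≤ A.rank + B.rank := by
  rw [Matrix.rank, Matrix.rank, Matrix.rank, Matrix.mulVecLin_add]
  have h : LinearMap.range (A.mulVecLin + B.mulVecLin) ≤
      LinearMap.range A.mulVecLin ⊔ LinearMap.range B.mulVecLin := by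
    rintro x ⟨y, rfl⟩
    exact Submodule.mem_sup.2 ⟨_, ⟨y, rfl⟩, _, ⟨y, rfl⟩, rfl⟩
  refine (Submodule.finrank_mono h).trans ?_
  have := Submodule.finrank_sup_add_finrank_inf_eq
    (LinearMap.range A.mulVecLin) (LinearMap.range B.mulVecLin)
  omega

lemma matRank_smul_le (c : ℝ) (A : Matrix (Fin m) (Fin n) ℝ) :
    (c • A).rank ≤ A.rank := by
  have h : c • A = (c • (1 : Matrix (Fin m) (Fin m) ℝ)) * A := by
    rw [Matrix.smul_mul, Matrix.one_mul]
  rw [h]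
  exact Matrix.rank_mul_le_right _ _

lemma tangentProj_alt (U : Matrix (Fin m) (Fin r) ℝ) (V : Matrix (Fin n) (Fin r) ℝ)
    (Z : Matrix (Fin m) (Fin n) ℝ) :
    tangentProj U V Z = (U * Uᵀ) * Z + (Z - (U * Uᵀ) * Z) * (V * Vᵀ) := by
  simp only [tangentProj, Matrix.sub_mul]
  abel

lemma rank_tangentProj_le (U : Matrix (Fin m) (Fin r) ℝ) (V : Matrix (Fin n) (Fin r) ℝ)
    (Z : Matrix (Fin m) (Fin n) ℝ) :
    (tangentProj U V Z).rank ≤ 2 * r := by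
  rw [tangentProj_alt]
  refine (matRank_add_le _ _).trans ?_
  have h1 : ((U * Uᵀ) * Z).rank ≤ r := by
    rw [Matrix.mul_assoc]
    exact (Matrix.rank_mul_le_left _ _).trans (Matrix.rank_le_width U)
  have h2 : ((Z - (U * Uᵀ) * Z) * (V * Vᵀ)).rank ≤ r := by
    rw [← Matrix.mul_assoc]
    exact (Matrix.rank_mul_le_left _ _).trans (Matrix.rank_le_width ((Z - U * Uᵀ * Z) * V))
  omega

lemma residual_alt (U : Matrix (Fin m) (Fin r) ℝ) (V : Matrix (Fin n) (Fin r) ℝ)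
    (X : Matrix (Fin m) (Fin n) ℝ) :
    X - tangentProj U V X = (1 - U * Uᵀ) * (X * (1 - V * Vᵀ)) := by
  simp only [tangentProj, Matrix.mul_sub, Matrix.sub_mul, Matrix.mul_one, Matrix.one_mul,
    Matrix.mul_assoc]
  abel

lemma rank_residual_le (U : Matrix (Fin m) (Fin r) ℝ) (V : Matrix (Fin n) (Fin r) ℝ)
    (X : Matrix (Fin m) (Fin n) ℝ) :
    (X - tangentProj U V X).rank ≤ X.rank := by
  rw [residual_alt]
  exact (Matrix.rank_mul_le_right _ _).trans (Matrix.rank_mul_le_left _ _)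

lemma proj_orth (U : Matrix (Fin m) (Fin r) ℝ) (V : Matrix (Fin n) (Fin r) ℝ)
    (hU : Uᵀ * U = 1) (hV : Vᵀ * V = 1) (A B : Matrix (Fin m) (Fin n) ℝ) :
    frobInner (tangentProj U V A) (B - tangentProj U V B) = 0 := by
  have hQ : (U * Uᵀ) * (U * Uᵀ) = U * Uᵀ := by
    rw [Matrix.mul_assoc, ← Matrix.mul_assoc Uᵀ U Uᵀ, hU, Matrix.one_mul]
  have hPv : (V * Vᵀ) * (V * Vᵀ) = V * Vᵀ := by
    rw [Matrix.mul_assoc, ← Matrix.mul_assoc Vᵀ V Vᵀ, hV, Matrix.one_mul]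
  have hQ0 : (1 - U * Uᵀ) * (U * Uᵀ) = 0 := by
    rw [Matrix.sub_mul, Matrix.one_mul, hQ, sub_self]
  have hPv0 : (V * Vᵀ) * (1 - V * Vᵀ) = 0 := by
    rw [Matrix.mul_sub, Matrix.mul_one, hPv, sub_self]
  have key : ((1 - U * Uᵀ) * tangentProj U V A) * (1 - V * Vᵀ) = 0 := by
    rw [tangentProj_alt, Matrix.mul_add, Matrix.add_mul]
    have e1 : (1 - U * Uᵀ) * ((U * Uᵀ) * A) = 0 := by
      rw [← Matrix.mul_assoc, hQ0, Matrix.zero_mul]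
    have e2 : ((1 - U * Uᵀ) * ((A - (U * Uᵀ) * A) * (V * Vᵀ))) * (1 - V * Vᵀ) = 0 := by
      rw [Matrix.mul_assoc (1 - U * Uᵀ), Matrix.mul_assoc (A - U * Uᵀ * A), hPv0,
        Matrix.mul_zero, Matrix.mul_zero]
    rw [e1, Matrix.zero_mul, e2, add_zero]
  have ht1 : (1 - U * Uᵀ)ᵀ = 1 - U * Uᵀ := by
    rw [Matrix.transpose_sub, Matrix.transpose_one, Matrix.transpose_mul,
      Matrix.transpose_transpose]
  have ht2 : (1 - V * Vᵀ)ᵀ = 1 - V * Vᵀ := by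
    rw [Matrix.transpose_sub, Matrix.transpose_one, Matrix.transpose_mul,
      Matrix.transpose_transpose]
  rw [frobInner_comm, residual_alt, frobInner_mul_left, frobInner_mul_right, ht1, ht2, key]
  simp [frobInner]

end Aux

/-- Lemma 4: `‖P_{S_l} 𝒜* 𝒜 (I − P_{S_l})(X)‖_F ≤ R₃ᵣ ‖(I − P_{S_l})(X)‖_F`. -/
theorem tangent_proj_AstarA_bound {m n p : ℕ}
    (A : Matrix (Fin m) (Fin n) ℝ →ₗ[ℝ] (Fin p → ℝ))
    (Astar : (Fin p → ℝ) →ₗ[ℝ] Matrix (Fin m) (Fin n) ℝ)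
    (hAstar : ∀ (v : Fin p → ℝ) (Z : Matrix (Fin m) (Fin n) ℝ),
      euclInner (A Z) v = frobInner Z (Astar v))
    (r : ℕ) (R3 : ℝ) (hR3 : IsRIC A (3 * r) R3)
    (Xl : Matrix (Fin m) (Fin n) ℝ) (hrankXl : Xl.rank = r)
    -- reduced SVD of `X_l`, defining the tangent space `S_l`
    (Ul : Matrix (Fin m) (Fin r) ℝ) (Vl : Matrix (Fin n) (Fin r) ℝ)
    (Sl : Matrix (Fin r) (Fin r) ℝ)
    (hUl : Ulᵀ * Ul = 1) (hVl : Vlᵀ * Vl = 1)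
    (hSl : Sl.IsDiag ∧ ∀ i, 0 < Sl i i) (hXlsvd : Xl = Ul * Sl * Vlᵀ)
    (X : Matrix (Fin m) (Fin n) ℝ) (hrankX : X.rank = r) :
    frobNorm (tangentProj Ul Vl (Astar (A (X - tangentProj Ul Vl X)))) ≤
      R3 * frobNorm (X - tangentProj Ul Vl X) := by
  obtain ⟨hmem, -⟩ := hR3
  set W := X - tangentProj Ul Vl X with hWdef
  set Z := Astar (A W) with hZdef
  set Y := tangentProj Ul Vl Z with hYdef
  have hWr : W.rank ≤ r := by
    have h := rank_residual_le Ul Vl X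
    rw [← hWdef, hrankX] at h
    exact h
  have hYr : Y.rank ≤ 2 * r := by
    have h := rank_tangentProj_le Ul Vl Z
    rwa [← hYdef] at h
  have horth := proj_orth Ul Vl hUl hVl Z Z
  rw [← hYdef] at horth
  have hYZ : frobInner Y Z = frobInner Y Y := by
    rw [frobInner_sub_right] at horth
    linarith
  have hYW : frobInner Y W = 0 := by
    have h := proj_orth Ul Vl hUl hVl Z X
    rw [← hYdef, ← hWdef] at h
    exact h
  have h1 : euclInner (A Y) (A W) = frobInner Y Y := by
    rw [hAstar (A W) Y, ← hZdef]
    exact hYZ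
  set a := frobNorm W with hadef
  set b := frobNorm Y with hbdef
  have ha0 : 0 ≤ a := Real.sqrt_nonneg _
  have hb0 : 0 ≤ b := Real.sqrt_nonneg _
  have hbb : frobInner Y Y = b ^ 2 := by rw [hbdef, frobNorm_sq]
  have haa : frobInner W W = a ^ 2 := by rw [hadef, frobNorm_sq]
  clear_value W Z Y a b
  rcases eq_or_lt_of_le hb0 with hb | hbpos
  · rw [← hb]
    rcases eq_or_lt_of_le ha0 with ha | hapos
    · rw [← ha, mul_zero]
    · have hr := hmem W (hWr.trans (by omega))
      rw [← hadef] at hr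
      have ha2 : 0 < a ^ 2 := by positivity
      nlinarith [hr.1, hr.2]
  · have hapos : 0 < a := by
      rcases eq_or_lt_of_le ha0 with ha | h
      · exfalso
        have hW0 : W = 0 := frobNorm_eq_zero' (by rw [← hadef, ← ha])
        have hY0 : Y = 0 := by
          rw [hYdef, hZdef, hW0]
          simp [tangentProj]
        have : b = 0 := by rw [hbdef, hY0]; simp [frobNorm]
        linarith
      · exact h
    set u := A Y with hudef
    set v := A W with hvdef
    clear_value u v
    have hM1rank : (a • Y + b • W).rank ≤ 3 * r := by
      have h0 := matRank_add_le (a • Y) (b • W)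
      have h1' := matRank_smul_le a Y
      have h2' := matRank_smul_le b W
      omega
    have hM2rank : (a • Y + (-b) • W).rank ≤ 3 * r := by
      have h0 := matRank_add_le (a • Y) ((-b) • W)
      have h1' := matRank_smul_le a Y
      have h2' := matRank_smul_le (-b) W
      omega
    have hup := (hmem _ hM1rank).2
    have hlo := (hmem _ hM2rank).1
    have hfn1 : frobNorm (a • Y + b • W) ^ 2 = 2 * (a ^ 2 * b ^ 2) := by
      rw [frobNorm_sq, frobInner_expand, hYW, hbb, haa]
      ring
    have hfn2 : frobNorm (a • Y + (-b) • W) ^ 2 = 2 * (a ^ 2 * b ^ 2) := by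
      rw [frobNorm_sq, frobInner_expand, hYW, hbb, haa]
      ring
    have hA1 : A (a • Y + b • W) = a • u + b • v := by
      rw [map_add, _root_.map_smul, _root_.map_smul, ← hudef, ← hvdef]
    have hA2 : A (a • Y + (-b) • W) = a • u + (-b) • v := by
      rw [map_add, _root_.map_smul, _root_.map_smul, ← hudef, ← hvdef]
    have hen1 : euclNorm (A (a • Y + b • W)) ^ 2 =
        a ^ 2 * euclInner u u + 2 * a * b * euclInner u v + b ^ 2 * euclInner v v := by
      rw [hA1, euclNorm_sq, euclInner_expand]
    have hen2 : euclNorm (A (a • Y + (-b) • W)) ^ 2 =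
        a ^ 2 * euclInner u u + 2 * a * (-b) * euclInner u v + (-b) ^ 2 * euclInner v v := by
      rw [hA2, euclNorm_sq, euclInner_expand]
    have huv : euclInner u v = b ^ 2 := h1.trans hbb
    rw [hfn1, hen1, huv] at hup
    rw [hfn2, hen2, huv] at hlo
    clear hmem hAstar hSl hXlsvd hM1rank hM2rank hA1 hA2 hen1 hen2 hfn1 hfn2 horth hYZ
    clear hYW h1 hWr hYr hrankX hrankXl hWdef hZdef hYdef hudef hvdef huv
    have key : a * b * b ^ 2 ≤ R3 * (a ^ 2 * b ^ 2) := by nlinarith [hup, hlo]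
    have habb : 0 < a * b ^ 2 := by positivity
    nlinarith [key, habb]
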